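/- Let A be a symmetric real n×n matrix that is negative semi-definite and Δt > 0 with Δt·‖A‖ < 1 (operator norm). Then I − Δt·A is invertible, and for any U ∈ ℝ^n, the vector V = (I − Δt·A)^{-1} U satisfies VᵀAV ≥ UᵀAU, i.e., the implicit Euler step for u' = Au does not decrease the (nonpositive) quadratic form VᵀAV; equivalently E(V) ≤ E(U) where E(W) = −WᵀAW ≥ 0. -/

import Mathlib

/-!
`I - Δt • A = I + Δt • (-A)` is positive definite, hence invertible. For `V = (I - Δt • A)⁻¹ U`
we have `U = V - Δt • A V`, and since `A` is symmetric,
`Uᵀ A U = Vᵀ A V - 2 Δt ‖A V‖² + Δt² (A V)ᵀ A (A V)`, where both correction terms are `≤ 0`.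
-/

open Matrix

namespace Matrix

variable {ι : Type*} {A : Matrix ι ι ℝ}

theorem posDef_one_sub_smul_of_neg_posSemidef [DecidableEq ι] (hA : (-A).PosSemidef) {t : ℝ}
    (ht : 0 ≤ t) : (1 - t • A).PosDef := by
  simpa [sub_eq_add_neg] using PosDef.one.add_posSemidef (hA.smul ht)

theorem dotProduct_mulVec_sub_smul_mulVec_le [Fintype ι] (hA : (-A).PosSemidef) {t : ℝ}
    (ht : 0 ≤ t) (V : ι → ℝ) :
    (V - t • A *ᵥ V) ⬝ᵥ A *ᵥ (V - t • A *ᵥ V) ≤ V ⬝ᵥ A *ᵥ V := by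
  set w := A *ᵥ V
  have hsymm : A.IsSymm := by simpa using hA.isHermitian.neg
  have hcross : V ⬝ᵥ A *ᵥ w = w ⬝ᵥ w := by
    rw [dotProduct_mulVec, ← mulVec_transpose, hsymm, dotProduct_comm]
  have hww : 0 ≤ w ⬝ᵥ w := by simpa using dotProduct_star_self_nonneg w
  have hwAw : w ⬝ᵥ A *ᵥ w ≤ 0 := by
    simpa [neg_mulVec] using hA.dotProduct_mulVec_nonneg w
  have hexpand : (V - t • w) ⬝ᵥ A *ᵥ (V - t • w)
      = V ⬝ᵥ w - 2 * t * (w ⬝ᵥ w) + t ^ 2 * (w ⬝ᵥ A *ᵥ w) := by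
    simp only [mulVec_sub, mulVec_smul, sub_dotProduct, dotProduct_sub, smul_dotProduct,
      dotProduct_smul, smul_eq_mul, hcross]
    ring
  rw [hexpand]
  nlinarith [mul_nonneg ht hww, mul_nonpos_of_nonneg_of_nonpos (sq_nonneg t) hwAw]

end Matrix

theorem stmt_14_general {n : ℕ} (A : Matrix (Fin n) (Fin n) ℝ)
    (hnsd : (-A).PosSemidef)
    (Δt : ℝ) (hΔt : 0 < Δt) :
    IsUnit ((1 : Matrix (Fin n) (Fin n) ℝ) - Δt • A) ∧
      ∀ U : Fin n → ℝ,
        U ⬝ᵥ A.mulVec U ≤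
          (((1 : Matrix (Fin n) (Fin n) ℝ) - Δt • A)⁻¹.mulVec U) ⬝ᵥ
            A.mulVec (((1 : Matrix (Fin n) (Fin n) ℝ) - Δt • A)⁻¹.mulVec U) := by
  have hunit := (posDef_one_sub_smul_of_neg_posSemidef hnsd hΔt.le).isUnit
  refine ⟨hunit, fun U => ?_⟩
  set V := (1 - Δt • A)⁻¹ *ᵥ U
  have hU : U = V - Δt • A *ᵥ V := by
    have hMV : (1 - Δt • A) *ᵥ V = U := by
      rw [mulVec_mulVec, mul_nonsing_inv _ ((isUnit_iff_isUnit_det _).mp hunit), one_mulVec]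
    rw [← hMV, sub_mulVec, one_mulVec, smul_mulVec]
  rw [hU]
  exact dotProduct_mulVec_sub_smul_mulVec_le hnsd hΔt.le V

theorem stmt_14 {n : ℕ} (A : Matrix (Fin n) (Fin n) ℝ)
    (hsymm : A.IsSymm) (hnsd : (-A).PosSemidef)
    (Δt : ℝ) (hΔt : 0 < Δt)
    (hnorm : Δt * ‖Matrix.toEuclideanCLM (𝕜 := ℝ) A‖ < 1) :
    IsUnit ((1 : Matrix (Fin n) (Fin n) ℝ) - Δt • A) ∧
      ∀ U : Fin n → ℝ,
        U ⬝ᵥ A.mulVec U ≤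
          (((1 : Matrix (Fin n) (Fin n) ℝ) - Δt • A)⁻¹.mulVec U) ⬝ᵥ
            A.mulVec (((1 : Matrix (Fin n) (Fin n) ℝ) - Δt • A)⁻¹.mulVec U) :=
  stmt_14_general A hnsd Δt hΔt
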